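/- Let η be a substitution over A, p ≥ 1, and x ∈ A. For every ℓ with 0 ≤ ℓ ≤ |η^p(x)| − 1, the ℓ-th letter of η^p(x) equals A_{η,x}(tail_{η,p,x}(ℓ)), i.e., the state reached in the automaton A_{η,x} after reading the digit word tail_{η,p,x}(ℓ). -/
import Mathlib


open Filter List

variable {A : Type*}

/-- A substitution applied to a word: concatenation of the images of its letters. -/
def substW (η : A → List A) (w : List A) : List A := (w.map η).flatten

/-- The `k`-th iterate of a substitution applied to a word. -/
def iterW (η : A → List A) (k : ℕ) (w : List A) : List A := (substW η)^[k] w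

/-- `η` is a substitution: nonempty images and at least one growing letter. -/
def IsSubstitution (η : A → List A) : Prop :=
  (∀ c, η c ≠ []) ∧ ∃ a, Tendsto (fun k => (iterW η k [a]).length) atTop atTop

/-- `(m i, a i)` for `i = 0, …, len-1` is an `x`-admissible sequence:
`m (i) ++ [a i]` is a prefix of `η (a (i+1))` and `m (len-1) ++ [a (len-1)]`
is a prefix of `η x`. -/
def AdmSeq (η : A → List A) (len : ℕ) (m : ℕ → List A) (a : ℕ → A) (x : A) : Prop :=
  (∀ i, i + 1 < len → (m i ++ [a i]) <+: η (a (i + 1))) ∧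
  (1 ≤ len → (m (len - 1) ++ [a (len - 1)]) <+: η x)

/-- `Σ_{j<k} |η^j(m_j)|`. -/
def sumLen (η : A → List A) (k : ℕ) (m : ℕ → List A) : ℕ :=
  ∑ j ∈ Finset.range k, (iterW η j (m j)).length

/-- `η^{k-1}(m_{k-1}) η^{k-2}(m_{k-2}) ⋯ η^0(m_0)`. -/
def concatDT (η : A → List A) (k : ℕ) (m : ℕ → List A) : List A :=
  ((List.range k).reverse.map (fun j => iterW η j (m j))).flatten

/-- The digit word `|m_{k-1}| ⊙ |m_{k-2}| ⊙ ⋯ ⊙ |m_0|`. -/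
def dtDigits (k : ℕ) (m : ℕ → List A) : List ℕ :=
  (List.range k).reverse.map (fun j => (m j).length)

/-- Partial run of the automaton `A_{η,x}`: from state `x`, the digit `d`
moves to the `d`-th letter of `η x` when `d < |η x|`. -/
def run (η : A → List A) : List ℕ → A → Option A
  | [], x => some x
  | d :: w, x => if h : d < (η x).length then run η w ((η x)[d]) else none

/-- `u` restricted to nonnegative positions is a periodic point of `η` of period `p`:
every `η^p`-image of a prefix of `u` is again a prefix of `u`. -/
def RightPer (η : A → List A) (p : ℕ) (u : ℤ → A) : Prop :=
  ∀ n : ℕ, ∀ j : ℕ, j < (iterW η p (List.ofFn (fun i : Fin (n+1) => u i))).length →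
    (iterW η p (List.ofFn (fun i : Fin (n+1) => u i)))[j]? = some (u j)

/-- `u` restricted to negative positions is a periodic point of `η` of period `p`:
every `η^p`-image of a suffix `u_{-(n+1)} ⋯ u_{-1}` of the left part is again a
suffix of the left part of `u`. -/
def LeftPer (η : A → List A) (p : ℕ) (u : ℤ → A) : Prop :=
  ∀ n : ℕ, ∀ j : ℕ,
    j < (iterW η p (List.ofFn (fun i : Fin (n+1) => u ((i : ℤ) - (n+1))))).length →
    (iterW η p (List.ofFn (fun i : Fin (n+1) => u ((i : ℤ) - (n+1)))))[j]? =
      some (u ((j : ℤ) -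
        (iterW η p (List.ofFn (fun i : Fin (n+1) => u ((i : ℤ) - (n+1))))).length))

/-- `u : ℤ → A` is a two-sided periodic point of `η` of period `p ≥ 1` with
growing seed `u₋₁ | u₀`. -/
def TwoSidedPerPoint (η : A → List A) (p : ℕ) (u : ℤ → A) : Prop :=
  1 ≤ p ∧ RightPer η p u ∧ LeftPer η p u ∧
  Tendsto (fun k => (iterW η k [u 0]).length) atTop atTop ∧
  Tendsto (fun k => (iterW η k [u (-1)]).length) atTop atTop

/-- The Dumont–Thomas decomposition data of a positive integer `n` with respect to
the letter `x` (Theorem of Dumont–Thomas for the right-infinite part):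
`p ∣ k`, `p ≤ k`, the sequence is `x`-admissible, `m_{k-1} ⋯ m_{k-p} ≠ ε` and
`Σ_{j<k} |η^j(m_j)| = n`. -/
def PosSpec (η : A → List A) (p : ℕ) (x : A) (n : ℤ) (k : ℕ) (m : ℕ → List A)
    (a : ℕ → A) : Prop :=
  p ∣ k ∧ p ≤ k ∧ AdmSeq η k m a x ∧ (∃ i, i < p ∧ m (k - 1 - i) ≠ []) ∧
  (sumLen η k m : ℤ) = n

/-- The Dumont–Thomas decomposition data of an integer `n ≤ -2` with respect to
the letter `b` (Theorem of Dumont–Thomas for the left-infinite part). -/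
def NegSpec (η : A → List A) (p : ℕ) (b : A) (n : ℤ) (k : ℕ) (m : ℕ → List A)
    (a : ℕ → A) : Prop :=
  p ∣ k ∧ p ≤ k ∧ AdmSeq η k m a b ∧
  ((List.range p).map (fun i => iterW η (p - 1 - i) (m (k - 1 - i)))).flatten
      ++ [a (k - p)] ≠ iterW η p [b] ∧
  (sumLen η k m : ℤ) = n + (iterW η k [b]).length

/-- `w` is the Dumont–Thomas complement representation `rep_u(n)` of `n ∈ ℤ`. -/
def RepSpec (η : A → List A) (p : ℕ) (u : ℤ → A) (n : ℤ) (w : List ℕ) : Prop :=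
  (n = 0 ∧ w = [0]) ∨ (n = -1 ∧ w = [1]) ∨
  (1 ≤ n ∧ ∃ k m a, PosSpec η p (u 0) n k m a ∧ w = 0 :: dtDigits k m) ∨
  (n ≤ -2 ∧ ∃ k m a, NegSpec η p (u (-1)) n k m a ∧ w = 1 :: dtDigits k m)

/-- Run of the automaton `A_{η,s}` with initial state `start`: the first digit
`0` (resp. `1`) moves to `u 0` (resp. `u (-1)`). -/
def runSeed (η : A → List A) (u : ℤ → A) : List ℕ → Option A
  | [] => none
  | d :: w => if d = 0 then run η w (u 0) else if d = 1 then run η w (u (-1)) else none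

/-- `|η^{k-p-1}(m_{k-1}) ⋯ η^0(m_p)|`, the `u`-quotient of a positive integer. -/
def uQuotPos (η : A → List A) (p k : ℕ) (m : ℕ → List A) : ℤ :=
  ∑ j ∈ Finset.range (k - p), ((iterW η j (m (j + p))).length : ℤ)

/-- `w = tail_{η,p,x}(n)`: the digit word of the unique `x`-admissible sequence of
length `p` whose length-sum is `n`. -/
def TailSpec (η : A → List A) (p : ℕ) (x : A) (n : ℕ) (w : List ℕ) : Prop :=
  ∃ m a, AdmSeq η p m a x ∧ sumLen η p m = n ∧ w = dtDigits p m

/-- Radix order: shorter words first, ties broken lexicographically. -/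
def radLt (v w : List ℕ) : Prop :=
  v.length < w.length ∨ (v.length = w.length ∧ List.Lex (· < ·) v w)

/-- Reversed-radix order: longer words first, ties broken lexicographically. -/
def revLt (v w : List ℕ) : Prop :=
  w.length < v.length ∨ (v.length = w.length ∧ List.Lex (· < ·) v w)

/-- The total order `≺` on `{0,1}D*`. -/
def precLt (v w : List ℕ) : Prop :=
  (v.head? = some 1 ∧ w.head? = some 0) ∨
  (v.head? = some 0 ∧ w.head? = some 0 ∧ radLt v w) ∨
  (v.head? = some 1 ∧ w.head? = some 1 ∧ revLt v w)

/-- The base-2 value `Σ_{i<k} w_i 2^i` of the word `w = w_{k-1} ⋯ w_0`. -/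
def natVal2 (w : List ℕ) : ℕ := w.foldl (fun acc d => 2 * acc + d) 0

/-- The two's complement value `Σ_{i<k} w_i 2^i − w_{k-1} 2^k`. -/
def val2c (w : List ℕ) : ℤ := (natVal2 w : ℤ) - (w.headI : ℤ) * 2 ^ w.length

/-- Fibonacci numbers with `F 0 = 1`, `F 1 = 2`. -/
def fib2 : ℕ → ℕ
  | 0 => 1
  | 1 => 2
  | n + 2 => fib2 (n + 1) + fib2 n

/-- The Fibonacci complement value `Σ_{i<k} w_i F_i − w_{k-1} F_k`
of the word `w = w_{k-1} ⋯ w_0`. -/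
def valFc (w : List ℕ) : ℤ :=
  (∑ i ∈ Finset.range w.length, (w.reverse.getD i 0 : ℤ) * fib2 i) -
    (w.headI : ℤ) * fib2 w.length

lemma substW_append (η : A → List A) (v w : List A) :
    substW η (v ++ w) = substW η v ++ substW η w := by
  simp [substW]

lemma iterW_append (η : A → List A) (k : ℕ) (v w : List A) :
    iterW η k (v ++ w) = iterW η k v ++ iterW η k w := by
  induction k generalizing v w with
  | zero => simp [iterW]
  | succ k ih =>
    simp only [iterW, Function.iterate_succ_apply, substW_append]
    exact ih _ _

lemma iterW_succ_single (η : A → List A) (k : ℕ) (x : A) :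
    iterW η (k + 1) [x] = iterW η k (η x) := by
  simp [iterW, Function.iterate_succ_apply, substW]

lemma key_lemma (η : A → List A) :
    ∀ (k : ℕ) (x : A) (m : ℕ → List A) (a : ℕ → A), AdmSeq η k m a x →
      sumLen η k m < (iterW η k [x]).length ∧
      (iterW η k [x])[sumLen η k m]? = run η (dtDigits k m) x := by
  intro k
  induction k with
  | zero =>
    intro x m a _
    simp [sumLen, iterW, dtDigits, run]
  | succ k ih =>
    intro x m a hadm
    have h1 : (m k ++ [a k]) <+: η x := by
      simpa using hadm.2 (by omega)
    have hadm' : AdmSeq η k m a (a k) := by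
      refine ⟨fun i hi => hadm.1 i (by omega), fun hk => ?_⟩
      have e : k - 1 + 1 = k := by omega
      have := hadm.1 (k - 1) (by omega)
      rwa [e] at this
    obtain ⟨hlt, hih⟩ := ih (a k) m a hadm'
    obtain ⟨t, ht⟩ := h1
    have hxsplit : η x = m k ++ [a k] ++ t := ht.symm
    have hdlt : (m k).length < (η x).length := by
      rw [hxsplit]; simp
    have hget : (η x)[(m k).length]'hdlt = a k := by
      have : (η x)[(m k).length]? = some (a k) := by
        rw [hxsplit]
        rw [List.getElem?_append_left (by simp)]
        simp
      simpa [List.getElem?_eq_getElem hdlt] using this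
    have hdig : dtDigits (k + 1) m = (m k).length :: dtDigits k m := by
      simp [dtDigits, List.range_succ]
    have hrun : run η (dtDigits (k + 1) m) x = run η (dtDigits k m) (a k) := by
      rw [hdig, run, dif_pos hdlt, hget]
    have hsum : sumLen η (k + 1) m = (iterW η k (m k)).length + sumLen η k m := by
      simp [sumLen, Finset.sum_range_succ]; omega
    have hsplit : iterW η (k + 1) [x]
        = iterW η k (m k) ++ (iterW η k [a k] ++ iterW η k t) := by
      rw [iterW_succ_single, hxsplit, iterW_append, iterW_append, List.append_assoc]
    constructor
    · rw [hsplit, hsum]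
      simp only [List.length_append]
      omega
    · rw [hsplit, hsum, hrun, ← hih]
      rw [List.getElem?_append_right (by omega)]
      rw [List.getElem?_append_left (by omega : (iterW η k (m k)).length + sumLen η k m - (iterW η k (m k)).length < (iterW η k [a k]).length)]
      congr 1
      omega

/-- For every `ℓ < |η^p(x)|`, the `ℓ`-th letter of `η^p(x)` is
the state reached by `A_{η,x}` after reading `tail_{η,p,x}(ℓ)` (the digit word of
the unique `x`-admissible sequence of length `p` with length-sum `ℓ`). -/
theorem letter_eq_automaton_tail [Finite A] (η : A → List A)
    (hη : IsSubstitution η) (p : ℕ) (hp : 1 ≤ p) (x : A) (ℓ : ℕ)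
    (hℓ : ℓ < (iterW η p [x]).length) (m : ℕ → List A) (a : ℕ → A)
    (hadm : AdmSeq η p m a x) (hsum : sumLen η p m = ℓ) :
    (iterW η p [x])[ℓ]? = run η (dtDigits p m) x := by
  rw [← hsum]
  exact (key_lemma η p x m a hadm).2
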